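/- arXiv:1010.1133 — 2 statements merged into one kernel-verified Lean document; each statement's English description precedes it below -/
import Mathlib

section
/- For all z, z' ∈ C^n with Im(z·conj(z')) = 0 and all t ∈ R, the Carnot-Carathéodory distance satisfies d([z,t],[z',t]) = ‖z'-z‖, where ‖·‖ is the Euclidean norm on C^n. -/
open scoped Real ENNReal
open MeasureTheory

noncomputable section

/-- The Heisenberg group `ℍⁿ`, identified with `ℂⁿ × ℝ` (with the Euclidean `ℓ²` norm on
the `ℂⁿ` factor). -/
abbrev Heis (n : ℕ) : Type := EuclideanSpace ℂ (Fin n) × ℝ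

/-- Borel σ-algebra on `ℂⁿ`. -/
instance (n : ℕ) : MeasurableSpace (EuclideanSpace ℂ (Fin n)) := borel _

instance (n : ℕ) : BorelSpace (EuclideanSpace ℂ (Fin n)) := ⟨rfl⟩

/-- Lebesgue measure on `ℂⁿ`. -/
instance (n : ℕ) : MeasureSpace (EuclideanSpace ℂ (Fin n)) :=
  ⟨Measure.map ((WithLp.equiv 2 (Fin n → ℂ)).symm) volume⟩

namespace Heis

/-- The Hermitian product `z ⬝ conj w = ∑ zⱼ conj(wⱼ)`. -/
def herm {n : ℕ} (z w : EuclideanSpace ℂ (Fin n)) : ℂ :=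
  ∑ j, z j * (starRingEnd ℂ) (w j)

/-- The Heisenberg group law `[z,t]·[z',t'] = [z+z', t+t'+2 Im (z ⬝ conj z')]`. -/
def mul {n : ℕ} (p q : Heis n) : Heis n :=
  (p.1 + q.1, p.2 + q.2 + 2 * (herm p.1 q.1).im)

/-- Dilations `δ_λ [z,t] = [λ z, λ² t]`. -/
def dilation {n : ℕ} (l : ℝ) (p : Heis n) : Heis n := (l • p.1, l ^ 2 * p.2)

/-- A `C¹` horizontal curve in the Heisenberg group: at every point the tangent vector lies
in the horizontal subbundle spanned by the left-invariant fields
`X_j = ∂_{x_j} + 2 y_j ∂_t`, `Y_j = ∂_{y_j} - 2 x_j ∂_t`, which amounts to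
`t'(s) = 2 Im (z(s) ⬝ conj z'(s))`. -/
structure HorizCurve (n : ℕ) where
  z : ℝ → EuclideanSpace ℂ (Fin n)
  t : ℝ → ℝ
  z' : ℝ → EuclideanSpace ℂ (Fin n)
  hz : ∀ s : ℝ, HasDerivAt z (z' s) s
  ht : ∀ s : ℝ, HasDerivAt t (2 * (herm (z s) (z' s)).im) s
  hz' : Continuous z'

/-- The sub-Riemannian length of a horizontal curve (the metric `g` makes the horizontal
frame orthonormal, so the length is the integral of the Euclidean norm of `z'`). -/
def HorizCurve.length {n : ℕ} (γ : HorizCurve n) : ℝ :=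
  ∫ s in (0:ℝ)..1, ‖γ.z' s‖

/-- The Carnot–Carathéodory distance: the infimum of lengths of horizontal curves
joining `p` to `q`. -/
def ccDist {n : ℕ} (p q : Heis n) : ℝ :=
  sInf { L : ℝ | ∃ γ : HorizCurve n, γ.z 0 = p.1 ∧ γ.t 0 = p.2 ∧
      γ.z 1 = q.1 ∧ γ.t 1 = q.2 ∧ L = γ.length }

/-- Open CC-ball. -/
def ccBall {n : ℕ} (p : Heis n) (r : ℝ) : Set (Heis n) := { q | ccDist p q < r }

/-- Closed CC-ball. -/
def ccClosedBall {n : ℕ} (p : Heis n) (r : ℝ) : Set (Heis n) := { q | ccDist p q ≤ r }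

/-- CC-diameter of a set. -/
def ccDiam {n : ℕ} (F : Set (Heis n)) : ℝ :=
  sSup { r : ℝ | ∃ p ∈ F, ∃ q ∈ F, r = ccDist p q }

/-- A set is CC-bounded if the pairwise CC-distances of its points are bounded. -/
def ccBounded {n : ℕ} (F : Set (Heis n)) : Prop :=
  ∃ M : ℝ, ∀ p ∈ F, ∀ q ∈ F, ccDist p q ≤ M

/-- The vertical segment joining two points with the same `ℂⁿ`-component. -/
def vseg {n : ℕ} (p q : Heis n) : Set (Heis n) :=
  { x | x.1 = p.1 ∧ x.2 ∈ Set.uIcc p.2 q.2 }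

/-- The `t`-convex hull of a set. -/
def tco {n : ℕ} (F : Set (Heis n)) : Set (Heis n) :=
  { x | ∃ p₁ ∈ F, ∃ p₂ ∈ F, p₁.1 = p₂.1 ∧ x ∈ vseg p₁ p₂ }

/-- A set is `t`-convex if it contains the vertical segment joining any two of its points
having the same `ℂⁿ`-component. -/
def TConvex {n : ℕ} (E : Set (Heis n)) : Prop :=
  ∀ p ∈ E, ∀ q ∈ E, p.1 = q.1 → vseg p q ⊆ E

/-- The rotation `r_θ [z,t] = [(e^{iθ₁} z₁, …, e^{iθₙ} zₙ), t]`. -/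
def rot {n : ℕ} (θ : Fin n → ℝ) (p : Heis n) : Heis n :=
  ((WithLp.equiv 2 (Fin n → ℂ)).symm fun j => Complex.exp ((θ j : ℂ) * Complex.I) * p.1 j,
    p.2)

/-- Rotationally invariant sets: the class `𝓡`. -/
def RotInvariant {n : ℕ} (F : Set (Heis n)) : Prop :=
  ∀ θ : Fin n → ℝ, rot θ '' F ⊆ F

/-- The reflection `σ [z,t] = [conj z, t]`. -/
def sigmaRefl {n : ℕ} (p : Heis n) : Heis n :=
  ((WithLp.equiv 2 (Fin n → ℂ)).symm fun j => (starRingEnd ℂ) (p.1 j), p.2)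

/-- The Steiner symmetrization of a set with respect to the `ℂⁿ`-plane. -/
def steiner {n : ℕ} (F : Set (Heis n)) : Set (Heis n) :=
  { x | x.1 ∈ Prod.fst '' F ∧
      2 * |x.2| ≤ (volume { s : ℝ | ((x.1, s) : Heis n) ∈ F }).toReal }

/-- The isodiametric constant `C_I`. -/
def CI (n : ℕ) : ℝ :=
  sSup { x : ℝ | ∃ F : Set (Heis n), ccBounded F ∧ 0 < ccDiam F ∧
    x = (volume F).toReal / (ccDiam F) ^ (2 * n + 2) }

/-- The isodiametric constant `C_{I,𝓡}` for the restricted problem in the class `𝓡`. -/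
def CIR (n : ℕ) : ℝ :=
  sSup { x : ℝ | ∃ F : Set (Heis n), RotInvariant F ∧ ccBounded F ∧ 0 < ccDiam F ∧
    x = (volume F).toReal / (ccDiam F) ^ (2 * n + 2) }

end Heis

/-! Every horizontal curve from `[z,t]` to `[z',t]` is at least `‖z' - z‖` long, since its
`ℂⁿ`-projection is, by the fundamental theorem of calculus. The straight segment
`s ↦ [z + s (z' - z), t]` attains this bound: it is horizontal because its `t`-velocity
`2 Im ((z + s (z' - z)) ⬝ conj (z' - z)) = 2 Im (z ⬝ conj z')` vanishes. -/

open scoped InnerProductSpace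

namespace Heis

variable {n : ℕ}

theorem herm_eq_inner (z w : EuclideanSpace ℂ (Fin n)) : herm z w = ⟪w, z⟫_ℂ := by
  simp [herm, PiLp.inner_apply]

theorem herm_add_smul_self_im (z v : EuclideanSpace ℂ (Fin n)) (s : ℝ) :
    (herm (z + s • v) v).im = (herm z v).im := by
  simp [herm_eq_inner, ← Complex.ofReal_pow]

theorem herm_sub_right_im_of_im_eq_zero {z z' : EuclideanSpace ℂ (Fin n)}
    (h : (herm z z').im = 0) : (herm z (z' - z)).im = 0 := by
  rw [herm_eq_inner] at h ⊢
  simp [h, ← Complex.ofReal_pow]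

def HorizCurve.segment (z v : EuclideanSpace ℂ (Fin n)) (t : ℝ) (h : (herm z v).im = 0) :
    HorizCurve n where
  z s := z + s • v
  t _ := t
  z' _ := v
  hz s := by simpa using ((hasDerivAt_id s).smul_const v).const_add z
  ht s := by
    rw [herm_add_smul_self_im, h, mul_zero]
    exact hasDerivAt_const s t
  hz' := continuous_const

theorem HorizCurve.segment_length (z v : EuclideanSpace ℂ (Fin n)) (t : ℝ)
    (h : (herm z v).im = 0) : (HorizCurve.segment z v t h).length = ‖v‖ := by
  simp [HorizCurve.length, HorizCurve.segment]

theorem HorizCurve.norm_sub_le_length (γ : HorizCurve n) : ‖γ.z 1 - γ.z 0‖ ≤ γ.length := by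
  have hftc : ∫ s in (0:ℝ)..1, γ.z' s = γ.z 1 - γ.z 0 :=
    intervalIntegral.integral_eq_sub_of_hasDerivAt (fun s _ => γ.hz s)
      (γ.hz'.intervalIntegrable 0 1)
  rw [← hftc]
  exact intervalIntegral.norm_integral_le_integral_norm zero_le_one

end Heis

/-- `d([z,t],[z',t]) = ‖z' - z‖` whenever `Im (z ⬝ conj z') = 0`. -/
theorem stmt2 (n : ℕ) (z z' : EuclideanSpace ℂ (Fin n)) (t : ℝ)
    (h : (Heis.herm z z').im = 0) :
    Heis.ccDist (z, t) (z', t) = ‖z' - z‖ := by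
  let γ := Heis.HorizCurve.segment z (z' - z) t (Heis.herm_sub_right_im_of_im_eq_zero h)
  apply IsLeast.csInf_eq
  constructor
  · exact ⟨γ, by simp [γ, Heis.HorizCurve.segment], rfl, by simp [γ, Heis.HorizCurve.segment],
      rfl, (Heis.HorizCurve.segment_length _ _ _ _).symm⟩
  · rintro L ⟨γ, h0, -, h1, -, rfl⟩
    simpa [h0, h1] using γ.norm_sub_le_length
end
end

section
/- Let F ⊂ H^n be compact with σ(F) = F, where σ([z,t]) = [conj(z), t]. Then the Steiner symmetrization St(F) of F with respect to the C^n-plane satisfies diam(St F) ≤ diam F in the Carnot-Carathéodory metric. -/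
open scoped Real ENNReal
open MeasureTheory

noncomputable section

/-!
For `p, q ∈ St F` the fibres of `F` over `p.1` and `q.1` contain heights `s, s'` with
`|q.2 - p.2| ≤ |s' - s|`, because each fibre is at least twice as long as the height of the point
of `St F` above it.

Homotoping a horizontal curve linearly to the segment between its endpoints in `ℂⁿ` does not
increase its length, and its vertical change passes through every value between its own and
`2 Im (z₀ ⬝ conj z₁)`, that of the segment. Hence `d(p, q) ≤ d((p.1, s), (q.1, s'))` as soon as
`q.2 - p.2` lies between `2 Im (p.1 ⬝ conj q.1)` and `s' - s`. Otherwise it lies between that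
value and `s - s'`, and then the isometry `ι` together with `σ(F) = F` gives
`d(p, q) ≤ d(σ(p.1, s), σ(q.1, s'))`. Finally, a segment with a circle added joins any two points
by a curve of controlled length, so `d` is bounded on the compact set `F`.
-/

namespace Heis

open Complex

variable {n : ℕ}

local notation "ℂⁿ" => EuclideanSpace ℂ (Fin n)

lemma herm_eq_inner_s11 (z w : ℂⁿ) : herm z w = inner ℂ w z := by
  simp [herm, PiLp.inner_apply]

lemma im_herm_self (z : ℂⁿ) : (herm z z).im = 0 := by
  simpa [herm_eq_inner_s11] using inner_self_im (𝕜 := ℂ) z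

lemma herm_self_of_norm_eq_one {v : ℂⁿ} (hv : ‖v‖ = 1) : herm v v = 1 := by
  rw [herm_eq_inner_s11, inner_self_eq_norm_sq_to_K, hv]
  simp

lemma im_herm_swap (z w : ℂⁿ) : (herm w z).im = -(herm z w).im := by
  rw [herm_eq_inner_s11, herm_eq_inner_s11, ← inner_conj_symm, conj_im]

lemma _root_.Continuous.herm {α : Type*} [TopologicalSpace α] {f g : α → ℂⁿ} (hf : Continuous f)
    (hg : Continuous g) : Continuous fun a => herm (f a) (g a) := by
  simp only [herm_eq_inner_s11]
  exact hg.inner hf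

lemma _root_.HasDerivAt.herm {f g : ℝ → ℂⁿ} {f' g' : ℂⁿ} {s : ℝ} (hf : HasDerivAt f f' s)
    (hg : HasDerivAt g g' s) :
    HasDerivAt (fun s => herm (f s) (g s)) (herm (f s) g' + herm f' (g s)) s := by
  simp only [herm_eq_inner_s11]
  rw [add_comm]
  exact hg.inner ℂ hf

lemma herm_add_left (z z' w : ℂⁿ) : herm (z + z') w = herm z w + herm z' w := by
  simp [herm, add_mul, Finset.sum_add_distrib]

lemma herm_add_right (z w w' : ℂⁿ) : herm z (w + w') = herm z w + herm z w' := by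
  simp [herm, mul_add, Finset.sum_add_distrib]

lemma herm_sub_right (z w w' : ℂⁿ) : herm z (w - w') = herm z w - herm z w' := by
  simp [herm, mul_sub, Finset.sum_sub_distrib]

lemma herm_smul_left (c : ℂ) (z w : ℂⁿ) : herm (c • z) w = c * herm z w := by
  simp [herm, Finset.mul_sum, mul_assoc]

lemma herm_smul_right (c : ℂ) (z w : ℂⁿ) : herm z (c • w) = starRingEnd ℂ c * herm z w := by
  simp [herm, Finset.mul_sum, mul_left_comm]

lemma herm_real_smul_left (r : ℝ) (z w : ℂⁿ) : herm (r • z) w = r * herm z w := by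
  simp [herm, Finset.mul_sum, mul_assoc]

lemma im_herm_lineMap (z₀ z₁ : ℂⁿ) (s : ℝ) :
    (herm (AffineMap.lineMap z₀ z₁ s) (z₁ - z₀)).im = (herm z₀ z₁).im := by
  rw [AffineMap.lineMap_apply_module', herm_add_left, herm_real_smul_left, herm_sub_right z₀]
  simp [im_herm_self]

def conjE : ℂⁿ ≃ₗᵢ[ℝ] ℂⁿ := LinearIsometryEquiv.piLpCongrRight 2 fun _ => conjLIE

lemma conjE_apply (z : ℂⁿ) (j : Fin n) : conjE z j = (starRingEnd ℂ) (z j) := by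
  simp [conjE, LinearIsometryEquiv.piLpCongrRight_apply]

lemma herm_conjE (z w : ℂⁿ) : herm (conjE z) (conjE w) = (starRingEnd ℂ) (herm z w) := by
  simp [herm, conjE_apply, map_sum]

namespace HorizCurve

def Joins (γ : HorizCurve n) (p q : Heis n) : Prop :=
  γ.z 0 = p.1 ∧ γ.t 0 = p.2 ∧ γ.z 1 = q.1 ∧ γ.t 1 = q.2

lemma continuous_z (γ : HorizCurve n) : Continuous γ.z :=
  continuous_iff_continuousAt.2 fun s => (γ.hz s).continuousAt

lemma rise_eq_integral (γ : HorizCurve n) :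
    γ.t 1 - γ.t 0 = ∫ s in (0 : ℝ)..1, 2 * (herm (γ.z s) (γ.z' s)).im :=
  (intervalIntegral.integral_eq_sub_of_hasDerivAt (fun s _ => γ.ht s) (Continuous.intervalIntegrable
    (by have := γ.continuous_z.herm γ.hz'; fun_prop) 0 1)).symm

lemma length_nonneg (γ : HorizCurve n) : 0 ≤ γ.length :=
  intervalIntegral.integral_nonneg zero_le_one fun _ _ => norm_nonneg _

lemma norm_sub_le_length_s11 (γ : HorizCurve n) : ‖γ.z 1 - γ.z 0‖ ≤ γ.length := by
  rw [← intervalIntegral.integral_eq_sub_of_hasDerivAt (fun s _ => γ.hz s)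
    (γ.hz'.intervalIntegrable 0 1)]
  exact intervalIntegral.norm_integral_le_integral_norm zero_le_one

@[simps]
def lift (z z' : ℝ → ℂⁿ) (hz : ∀ s, HasDerivAt z (z' s) s) (hz' : Continuous z') (t₀ : ℝ) :
    HorizCurve n where
  z := z
  t s := t₀ + ∫ u in (0 : ℝ)..s, 2 * (herm (z u) (z' u)).im
  z' := z'
  hz := hz
  hz' := hz'
  ht s := by
    have hc : Continuous fun u => 2 * (herm (z u) (z' u)).im := by
      have := (continuous_iff_continuousAt.2 fun s => (hz s).continuousAt).herm hz'
      fun_prop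
    exact (intervalIntegral.integral_hasDerivAt_right (hc.intervalIntegrable 0 s)
      (hc.stronglyMeasurableAtFilter _ _) hc.continuousAt).const_add t₀

lemma length_le_integral (γ : HorizCurve n) {f : ℝ → ℝ} (hf : IntervalIntegrable f volume 0 1)
    (h : ∀ s ∈ Set.Icc (0 : ℝ) 1, ‖γ.z' s‖ ≤ f s) : γ.length ≤ ∫ s in (0 : ℝ)..1, f s :=
  intervalIntegral.integral_mono_on zero_le_one (γ.hz'.norm.intervalIntegrable 0 1) hf h

def conj (γ : HorizCurve n) : HorizCurve n where
  z s := conjE (γ.z s)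
  t s := -γ.t s
  z' s := conjE (γ.z' s)
  hz s := (conjE.toContinuousLinearEquiv.hasFDerivAt (x := γ.z s)).comp_hasDerivAt s (γ.hz s)
  ht s := by simpa [herm_conjE] using (γ.ht s).fun_neg
  hz' := conjE.continuous.comp γ.hz'

lemma length_conj (γ : HorizCurve n) : γ.conj.length = γ.length := by
  simp [length, conj]

end HorizCurve

def iota (p : Heis n) : Heis n := (conjE p.1, -p.2)

lemma iota_iota (p : Heis n) : iota (iota p) = p := by
  ext <;> simp [iota, conjE_apply]

lemma sigmaRefl_eq_iota (p : Heis n) : sigmaRefl p = iota (p.1, -p.2) := by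
  ext <;> simp [sigmaRefl, iota, conjE_apply]

lemma HorizCurve.Joins.conj {γ : HorizCurve n} {p q : Heis n} (h : γ.Joins p q) :
    γ.conj.Joins (iota p) (iota q) := by
  obtain ⟨h₀, h₁, h₂, h₃⟩ := h
  simp [HorizCurve.Joins, HorizCurve.conj, iota, h₀, h₁, h₂, h₃]

lemma ccDist_eq_sInf (p q : Heis n) :
    ccDist p q = sInf (HorizCurve.length '' {γ | γ.Joins p q}) := by
  simp only [ccDist, HorizCurve.Joins, Set.image, Set.mem_ofPred_eq, and_assoc, eq_comm]

lemma ccDist_nonneg (p q : Heis n) : 0 ≤ ccDist p q := by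
  rw [ccDist_eq_sInf]
  exact Real.sInf_nonneg (Set.forall_mem_image.2 fun γ _ => γ.length_nonneg)

lemma ccDist_le_length {γ : HorizCurve n} {p q : Heis n} (h : γ.Joins p q) :
    ccDist p q ≤ γ.length := by
  rw [ccDist_eq_sInf]
  exact csInf_le ⟨0, Set.forall_mem_image.2 fun γ _ => γ.length_nonneg⟩ ⟨γ, h, rfl⟩

lemma ccDist_le_ccDist_of_forall {p q P Q : Heis n} (hPQ : ∃ γ : HorizCurve n, γ.Joins P Q)
    (h : ∀ γ : HorizCurve n, γ.Joins P Q → ∃ δ : HorizCurve n, δ.Joins p q ∧ δ.length ≤ γ.length) :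
    ccDist p q ≤ ccDist P Q := by
  obtain ⟨γ₀, hγ₀⟩ := hPQ
  rw [ccDist_eq_sInf P Q]
  refine le_csInf ⟨_, γ₀, hγ₀, rfl⟩ (Set.forall_mem_image.2 fun γ hγ => ?_)
  obtain ⟨δ, hδ, hle⟩ := h γ hγ
  exact (ccDist_le_length hδ).trans hle

lemma ccDist_iota (p q : Heis n) : ccDist (iota p) (iota q) = ccDist p q := by
  have key : ∀ p q : Heis n, HorizCurve.length '' {γ | γ.Joins p q} ⊆
      HorizCurve.length '' {γ | γ.Joins (iota p) (iota q)} := by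
    rintro p q _ ⟨γ, hγ, rfl⟩
    exact ⟨γ.conj, hγ.conj, γ.length_conj⟩
  rw [ccDist_eq_sInf, ccDist_eq_sInf]
  congr 1
  exact (key p q).antisymm' (by simpa only [iota_iota] using key (iota p) (iota q))

/-- Homotope `γ` linearly to the segment `[γ.z 0, γ.z 1]` and apply the intermediate value
theorem to the vertical change. -/
lemma HorizCurve.exists_joins_of_mem_uIcc (γ : HorizCurve n) (t₀ τ : ℝ)
    (hτ : τ ∈ Set.uIcc (2 * (herm (γ.z 0) (γ.z 1)).im) (γ.t 1 - γ.t 0)) :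
    ∃ δ : HorizCurve n, δ.Joins (γ.z 0, t₀) (γ.z 1, t₀ + τ) ∧ δ.length ≤ γ.length := by
  set u := γ.z 1 - γ.z 0
  set c : ℝ → ℂⁿ := ⇑(AffineMap.lineMap (k := ℝ) (γ.z 0) (γ.z 1))
  set w : ℝ → ℝ → ℂⁿ := fun l s => l • γ.z s + (1 - l) • c s
  set w' : ℝ → ℝ → ℂⁿ := fun l s => l • γ.z' s + (1 - l) • u
  have hw : ∀ l s, HasDerivAt (w l) (w' l s) s := fun l s =>
    ((γ.hz s).const_smul l).add (AffineMap.hasDerivAt_lineMap.const_smul (1 - l))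
  have hw' : ∀ l, Continuous (w' l) := fun l => by have := γ.hz'; fun_prop
  set P : ℝ → ℝ := fun l => ∫ s in (0 : ℝ)..1, 2 * (herm (w l s) (w' l s)).im
  have hP : Continuous P := by
    have hc : Continuous c := AffineMap.lineMap_continuous
    have := γ.continuous_z
    have := γ.hz'
    refine intervalIntegral.continuous_parametric_intervalIntegral_of_continuous' ?_ 0 1
    have : Continuous fun x : ℝ × ℝ => herm (w x.1 x.2) (w' x.1 x.2) :=
      Continuous.herm (by fun_prop) (by fun_prop)
    fun_prop
  have hP₀ : P 0 = 2 * (herm (γ.z 0) (γ.z 1)).im := by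
    simp [P, w, w', c, u, im_herm_lineMap]
  have hP₁ : P 1 = γ.t 1 - γ.t 0 := by
    simp [P, w, w', γ.rise_eq_integral]
  obtain ⟨l, hl, hPl⟩ := intermediate_value_uIcc hP.continuousOn (hP₀ ▸ hP₁ ▸ hτ)
  rw [Set.uIcc_of_le zero_le_one] at hl
  refine ⟨HorizCurve.lift (w l) (w' l) (hw l) (hw' l) t₀, ?_, ?_⟩
  · refine ⟨by simp [w, c], by simp, by simp [w, c], ?_⟩
    simp only [HorizCurve.lift_t]
    rw [← hPl]
  · calc _ ≤ ∫ s in (0 : ℝ)..1, (l * ‖γ.z' s‖ + (1 - l) * ‖u‖) := by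
          have := γ.hz'
          refine HorizCurve.length_le_integral _ (Continuous.intervalIntegrable (by fun_prop) 0 1)
            fun s _ => ?_
          refine (norm_add_le _ _).trans_eq ?_
          rw [norm_smul, norm_smul, Real.norm_of_nonneg hl.1,
            Real.norm_of_nonneg (by linarith [hl.2])]
      _ = l * γ.length + (1 - l) * ‖u‖ := by
          have := γ.hz'
          rw [intervalIntegral.integral_add (Continuous.intervalIntegrable (by fun_prop) 0 1)
            intervalIntegrable_const, intervalIntegral.integral_const_mul]
          simp [HorizCurve.length]
      _ ≤ γ.length := by nlinarith [γ.norm_sub_le_length_s11, hl.1, hl.2]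

lemma im_intervalIntegral {f : ℝ → ℂ} {a b : ℝ} (hf : IntervalIntegrable f volume a b) :
    (∫ s in a..b, f s).im = ∫ s in a..b, (f s).im :=
  (imCLM.intervalIntegral_comp_comm hf).symm

lemma integral_cexp_mul_eq_zero {c : ℂ} (hc : c ≠ 0) (h : cexp c = 1) :
    ∫ s in (0 : ℝ)..1, cexp (c * s) = 0 := by
  simp [integral_exp_mul_complex hc, h]

def loop (R θ s : ℝ) : ℂ := R * (cexp (θ * I * s) - 1)

def loopDeriv (R θ s : ℝ) : ℂ := R * θ * I * cexp (θ * I * s)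

lemma hasDerivAt_loop (R θ s : ℝ) : HasDerivAt (loop R θ) (loopDeriv R θ s) s := by
  have := (((hasDerivAt_id (s : ℂ)).const_mul (θ * I)).cexp.sub_const 1).const_mul (R : ℂ)
  exact this.comp_ofReal.congr_deriv (by simp only [loopDeriv, id]; ring)

lemma continuous_loopDeriv (R θ : ℝ) : Continuous (loopDeriv R θ) := by
  unfold loopDeriv; fun_prop

lemma loop_zero (R θ : ℝ) : loop R θ 0 = 0 := by simp [loop]

lemma loop_one {R θ : ℝ} (hθ : cexp (θ * I) = 1) : loop R θ 1 = 0 := by simp [loop, hθ]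

lemma norm_loopDeriv (R θ s : ℝ) : ‖loopDeriv R θ s‖ = |R * θ| := by
  have h : ‖cexp (θ * I * s)‖ = 1 := by
    rw [show (θ : ℂ) * I * s = ((θ * s : ℝ) : ℂ) * I by push_cast; ring]
    exact norm_exp_ofReal_mul_I _
  simp [loopDeriv, h, abs_mul]

lemma integral_loop {R θ : ℝ} (hθ : cexp (θ * I) = 1) (hθ₀ : θ ≠ 0) :
    ∫ s in (0 : ℝ)..1, loop R θ s = -R := by
  have hc : (θ : ℂ) * I ≠ 0 := by simpa using hθ₀
  simp only [loop]
  rw [intervalIntegral.integral_const_mul, intervalIntegral.integral_sub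
    (Continuous.intervalIntegrable (by fun_prop) 0 1) intervalIntegrable_const,
    integral_cexp_mul_eq_zero hc hθ]
  simp

lemma integral_im_loop_mul_conj {R θ : ℝ} (hθ : cexp (θ * I) = 1) (hθ₀ : θ ≠ 0) :
    ∫ s in (0 : ℝ)..1, (loop R θ s * starRingEnd ℂ (loopDeriv R θ s)).im = -(R ^ 2 * θ) := by
  have hc : -((θ : ℂ) * I) ≠ 0 := by simpa using hθ₀
  have hc' : cexp (-(θ * I)) = 1 := by rw [exp_neg, hθ, inv_one]
  have hpt : ∀ s : ℝ, loop R θ s * starRingEnd ℂ (loopDeriv R θ s)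
      = ((R ^ 2 * θ : ℝ) : ℂ) * I * cexp (-(θ * I) * s) - ((R ^ 2 * θ : ℝ) : ℂ) * I := by
    intro s
    have key : cexp (θ * I * s) * cexp (-(θ * I) * s) = 1 := by
      rw [← exp_add, neg_mul, add_neg_cancel, exp_zero]
    simp only [loop, loopDeriv, map_mul, conj_ofReal, conj_I, ← exp_conj]
    rw [show (θ : ℂ) * -I * s = -(θ * I) * s by ring]
    push_cast
    linear_combination (-(R : ℂ) ^ 2 * θ * I) * key
  rw [← im_intervalIntegral (Continuous.intervalIntegrable (by
    unfold loop loopDeriv; fun_prop) 0 1), intervalIntegral.integral_congr fun s _ => hpt s,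
    intervalIntegral.integral_sub (Continuous.intervalIntegrable (by fun_prop) 0 1)
      intervalIntegrable_const, intervalIntegral.integral_const_mul,
    integral_cexp_mul_eq_zero hc hc']
  simp [-ofReal_mul, -ofReal_pow]

/-- Adding a closed loop `w` to a segment adds the area of `w` and a cross term to the vertical
change; the other cross term is the derivative of `Im herm (c, w)`, which vanishes at both ends. -/
lemma integral_im_herm_lineMap_add (z₀ z₁ : ℂⁿ) {w w' : ℝ → ℂⁿ}
    (hw : ∀ s, HasDerivAt w (w' s) s) (hw' : Continuous w') (h₀ : w 0 = 0) (h₁ : w 1 = 0) :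
    ∫ s in (0 : ℝ)..1, (herm (AffineMap.lineMap z₀ z₁ s + w s) (z₁ - z₀ + w' s)).im
      = (herm z₀ z₁).im +
        ∫ s in (0 : ℝ)..1, ((herm (w s) (w' s)).im + 2 * (herm (w s) (z₁ - z₀)).im) := by
  have hwc : Continuous w := continuous_iff_continuousAt.2 fun s => (hw s).continuousAt
  have hc : Continuous (AffineMap.lineMap (k := ℝ) z₀ z₁) := AffineMap.lineMap_continuous
  have hd : ∀ s ∈ Set.uIcc (0 : ℝ) 1,
      HasDerivAt (fun s => (herm (AffineMap.lineMap z₀ z₁ s) (w s)).im)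
        ((herm (AffineMap.lineMap z₀ z₁ s) (w' s)).im + (herm (z₁ - z₀) (w s)).im) s :=
    fun s _ => by
      have hc' := AffineMap.hasDerivAt_lineMap (a := z₀) (b := z₁) (x := s)
      have := imCLM.hasFDerivAt.comp_hasDerivAt s (hc'.herm (hw s))
      simp only [Function.comp_def, imCLM_apply, add_im] at this
      exact this
  have hpt : ∀ s : ℝ, (herm (AffineMap.lineMap z₀ z₁ s + w s) (z₁ - z₀ + w' s)).im
      = (herm z₀ z₁).im + ((herm (w s) (w' s)).im + 2 * (herm (w s) (z₁ - z₀)).im)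
        + ((herm (AffineMap.lineMap z₀ z₁ s) (w' s)).im + (herm (z₁ - z₀) (w s)).im) := by
    intro s
    simp only [herm_add_left, herm_add_right, add_im]
    rw [im_herm_lineMap, im_herm_swap (w s) (z₁ - z₀)]
    ring
  have := Continuous.herm hwc hw'
  have := Continuous.herm hwc (continuous_const (y := z₁ - z₀))
  have := Continuous.herm hc hw'
  have := Continuous.herm (continuous_const (y := z₁ - z₀)) hwc
  rw [intervalIntegral.integral_congr fun s _ => hpt s,
    intervalIntegral.integral_add (Continuous.intervalIntegrable (by fun_prop) 0 1)
      (Continuous.intervalIntegrable (by fun_prop) 0 1),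
    intervalIntegral.integral_add intervalIntegrable_const
      (Continuous.intervalIntegrable (by fun_prop) 0 1),
    intervalIntegral.integral_eq_sub_of_hasDerivAt hd
      (Continuous.intervalIntegrable (by fun_prop) 0 1)]
  simp [h₀, h₁, herm]

/-- The segment from `z₀` to `z₁` with a circle of radius `|R|` in the direction `v` added. -/
lemma exists_curve_rise_eq (z₀ z₁ : ℂⁿ) {v : ℂⁿ} (hv : ‖v‖ = 1) (R : ℝ) {θ : ℝ}
    (hθ : cexp (θ * I) = 1) (hθ₀ : θ ≠ 0) :
    ∃ γ : HorizCurve n, γ.z 0 = z₀ ∧ γ.z 1 = z₁ ∧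
      γ.t 1 - γ.t 0 = 2 * (herm z₀ z₁).im + 4 * R * (herm (z₁ - z₀) v).im - 2 * R ^ 2 * θ ∧
      γ.length ≤ ‖z₁ - z₀‖ + |R * θ| := by
  have hw : ∀ s, HasDerivAt (fun s => loop R θ s • v) (loopDeriv R θ s • v) s :=
    fun s => (hasDerivAt_loop R θ s).smul_const v
  have hw' : Continuous fun s => loopDeriv R θ s • v := by
    have := continuous_loopDeriv R θ; fun_prop
  have hζ : ∀ s, HasDerivAt (fun s => AffineMap.lineMap z₀ z₁ s + loop R θ s • v)
      (z₁ - z₀ + loopDeriv R θ s • v) s :=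
    fun s => AffineMap.hasDerivAt_lineMap.add (hw s)
  refine ⟨HorizCurve.lift _ _ hζ (continuous_const.add hw') 0, by simp [loop_zero],
    by simp [loop_one hθ], ?_, ?_⟩
  · have hpt : ∀ s : ℝ, (herm (loop R θ s • v) (loopDeriv R θ s • v)).im
        + 2 * (herm (loop R θ s • v) (z₁ - z₀)).im
        = (loop R θ s * starRingEnd ℂ (loopDeriv R θ s)).im
          + 2 * (loop R θ s * herm v (z₁ - z₀)).im := by
      intro s
      rw [herm_smul_left, herm_smul_left, herm_smul_right, herm_self_of_norm_eq_one hv]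
      ring_nf
    have hloop : Continuous (loop R θ) := by unfold loop; fun_prop
    rw [HorizCurve.rise_eq_integral]
    simp only [HorizCurve.lift_z, HorizCurve.lift_z']
    rw [intervalIntegral.integral_const_mul, integral_im_herm_lineMap_add z₀ z₁ hw hw'
      (by simp [loop_zero]) (by simp [loop_one hθ]),
      intervalIntegral.integral_congr fun s _ => hpt s,
      intervalIntegral.integral_add (Continuous.intervalIntegrable (by
        have := continuous_loopDeriv R θ; fun_prop) 0 1)
        (Continuous.intervalIntegrable (by fun_prop) 0 1),
      integral_im_loop_mul_conj hθ hθ₀, intervalIntegral.integral_const_mul,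
      ← im_intervalIntegral (Continuous.intervalIntegrable (by fun_prop) 0 1),
      intervalIntegral.integral_mul_const, integral_loop hθ hθ₀]
    simp [im_herm_swap (z₁ - z₀) v]
    ring
  · refine ((HorizCurve.lift _ _ hζ _ 0).length_le_integral
      (f := fun _ => ‖z₁ - z₀‖ + |R * θ|) intervalIntegrable_const
      fun s _ => ?_).trans_eq (by simp)
    simp only [HorizCurve.lift_z']
    refine (norm_add_le _ _).trans ?_
    rw [norm_smul, hv, mul_one, norm_loopDeriv]

/-- A segment with a circle of radius `ρ` added overshoots the required vertical change once `ρ`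
dominates it; the interpolation lemma then corrects the vertical change exactly. -/
lemma exists_joins_length_le (hn : 0 < n) (p q : Heis n) :
    ∃ γ : HorizCurve n, γ.Joins p q ∧ γ.length ≤
      ‖q.1 - p.1‖ + 2 * π * (|q.2 - p.2 - 2 * (herm p.1 q.1).im| + ‖q.1 - p.1‖ + 1) := by
  set v : ℂⁿ := EuclideanSpace.single ⟨0, hn⟩ 1
  have hv : ‖v‖ = 1 := by simp [v]
  set m := (herm (q.1 - p.1) v).im
  have hm : |m| ≤ ‖q.1 - p.1‖ := by
    refine (abs_im_le_norm _).trans ?_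
    rw [herm_eq_inner_s11]
    exact (norm_inner_le_norm v _).trans_eq (by rw [hv, one_mul])
  set K := 2 * (herm p.1 q.1).im
  set ρ := |q.2 - p.2 - K| + ‖q.1 - p.1‖ + 1
  have hρ : |q.2 - p.2 - K| + |m| + 1 ≤ ρ := by linarith
  have hπ := Real.pi_gt_three
  obtain ⟨θ, hθ, hθ₀, hmem⟩ : ∃ θ : ℝ, cexp (θ * I) = 1 ∧ |θ| = 2 * π ∧
      q.2 - p.2 ∈ Set.uIcc K (K + 4 * ρ * m - 2 * ρ ^ 2 * θ) := by
    rcases le_total K (q.2 - p.2) with h | h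
    · refine ⟨-(2 * π), by simpa using exp_neg (2 * π * I), by simp [abs_of_pos Real.pi_pos],
        Set.mem_uIcc.2 (Or.inl ⟨h, ?_⟩)⟩
      nlinarith [neg_abs_le m, abs_nonneg m, le_abs_self (q.2 - p.2 - K)]
    · refine ⟨2 * π, by simp, by simp [abs_of_pos Real.pi_pos],
        Set.mem_uIcc.2 (Or.inr ⟨?_, h⟩)⟩
      nlinarith [le_abs_self m, abs_nonneg m, neg_abs_le (q.2 - p.2 - K)]
  obtain ⟨γ, hγ₀, hγ₁, hrise, hlen⟩ :=
    exists_curve_rise_eq p.1 q.1 hv ρ hθ (by rintro rfl; simp at hθ₀)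
  obtain ⟨δ, hδ, hδlen⟩ := γ.exists_joins_of_mem_uIcc p.2 (q.2 - p.2) (by
    rw [hγ₀, hγ₁, hrise]
    convert hmem using 2)
  refine ⟨δ, by simpa [hγ₀, hγ₁] using hδ, hδlen.trans (hlen.trans ?_)⟩
  rw [abs_mul, hθ₀, abs_of_pos (by positivity)]
  linarith

lemma ccBounded_of_isCompact (hn : 0 < n) {F : Set (Heis n)} (hF : IsCompact F) :
    ccBounded F := by
  have : Continuous fun x : Heis n × Heis n => herm x.1.1 x.2.1 :=
    Continuous.herm (by fun_prop) (by fun_prop)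
  obtain ⟨C, hC⟩ := (hF.prod hF).exists_bound_of_continuousOn (f := fun x : Heis n × Heis n =>
    ‖x.2.1 - x.1.1‖ + 2 * π * (|x.2.2 - x.1.2 - 2 * (herm x.1.1 x.2.1).im| + ‖x.2.1 - x.1.1‖ + 1))
    (by fun_prop)
  refine ⟨C, fun p hp q hq => ?_⟩
  obtain ⟨γ, hγ, hlen⟩ := exists_joins_length_le hn p q
  exact (ccDist_le_length hγ).trans (hlen.trans ((le_abs_self _).trans (hC (p, q) ⟨hp, hq⟩)))

lemma ccDist_le_of_mem_uIcc (hn : 0 < n) (p q : Heis n) {s s' : ℝ}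
    (h : q.2 - p.2 ∈ Set.uIcc (2 * (herm p.1 q.1).im) (s' - s)) :
    ccDist p q ≤ ccDist (p.1, s) (q.1, s') := by
  refine ccDist_le_ccDist_of_forall ((exists_joins_length_le hn _ _).imp fun _ h => h.1)
    fun γ ⟨h₀, h₁, h₂, h₃⟩ => ?_
  obtain ⟨δ, hδ, hlen⟩ :=
    γ.exists_joins_of_mem_uIcc p.2 (q.2 - p.2) (by simpa [h₀, h₁, h₂, h₃] using h)
  exact ⟨δ, by simpa [h₀, h₂] using hδ, hlen⟩

lemma exists_mem_of_mem_steiner {F : Set (Heis n)} (hF : IsCompact F) {p : Heis n}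
    (hp : p ∈ steiner F) : ∃ a b : ℝ, (p.1, a) ∈ F ∧ (p.1, b) ∈ F ∧ 2 * |p.2| ≤ b - a := by
  obtain ⟨⟨x, hxF, hx⟩, hvol⟩ := hp
  set S := {s : ℝ | (p.1, s) ∈ F}
  have hS : IsCompact S := by
    refine Metric.isCompact_of_isClosed_isBounded
      (hF.isClosed.preimage (continuous_const.prodMk continuous_id)) ?_
    exact (hF.image continuous_snd).isBounded.subset fun s hs => ⟨(p.1, s), hs, rfl⟩
  have hSne : S.Nonempty := ⟨x.2, by simpa [S, ← hx] using hxF⟩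
  refine ⟨sInf S, sSup S, hS.sInf_mem hSne, hS.sSup_mem hSne, hvol.trans ?_⟩
  have hsub : S ⊆ Set.Icc (sInf S) (sSup S) := fun s hs =>
    ⟨csInf_le hS.bddBelow hs, le_csSup hS.bddAbove hs⟩
  refine ENNReal.toReal_le_of_le_ofReal ?_ ((measure_mono hsub).trans Real.volume_Icc.le)
  exact sub_nonneg.2 (csInf_le_csSup hSne hS.bddBelow hS.bddAbove)

lemma exists_mem_abs_sub_le_of_mem_steiner {F : Set (Heis n)} (hF : IsCompact F)
    {p q : Heis n} (hp : p ∈ steiner F) (hq : q ∈ steiner F) :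
    ∃ s s' : ℝ, (p.1, s) ∈ F ∧ (q.1, s') ∈ F ∧ |q.2 - p.2| ≤ |s' - s| := by
  obtain ⟨a, b, ha, hb, hab⟩ := exists_mem_of_mem_steiner hF hp
  obtain ⟨a', b', ha', hb', hab'⟩ := exists_mem_of_mem_steiner hF hq
  have h : |q.2 - p.2| ≤ |p.2| + |q.2| := (abs_sub _ _).trans_eq (add_comm _ _)
  rcases le_total (b - a') (b' - a) with h' | h'
  · exact ⟨a, b', ha, hb', h.trans (by linarith [le_abs_self (b' - a)])⟩
  · exact ⟨b, a', hb, ha', h.trans (by linarith [neg_abs_le (a' - b)])⟩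

lemma mem_uIcc_or_mem_uIcc_neg {x d : ℝ} (k : ℝ) (h : |x| ≤ |d|) :
    x ∈ Set.uIcc k d ∨ x ∈ Set.uIcc k (-d) := by
  wlog hd : 0 ≤ d generalizing d
  · simpa [or_comm] using this (d := -d) (by rwa [abs_neg]) (by linarith)
  rw [abs_of_nonneg hd, abs_le] at h
  simp only [Set.mem_uIcc]
  rcases le_total k x with hk | hk
  · exact Or.inl (Or.inl ⟨hk, h.2⟩)
  · exact Or.inr (Or.inr ⟨h.1, hk⟩)

lemma exists_ccDist_le_of_mem_steiner (hn : 0 < n) {F : Set (Heis n)} (hF : IsCompact F)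
    (hσ : sigmaRefl '' F = F) {p q : Heis n} (hp : p ∈ steiner F) (hq : q ∈ steiner F) :
    ∃ P ∈ F, ∃ Q ∈ F, ccDist p q ≤ ccDist P Q := by
  obtain ⟨s, s', hs, hs', hle⟩ := exists_mem_abs_sub_le_of_mem_steiner hF hp hq
  rcases mem_uIcc_or_mem_uIcc_neg (2 * (herm p.1 q.1).im) hle with h | h
  · exact ⟨_, hs, _, hs', ccDist_le_of_mem_uIcc hn p q h⟩
  · refine ⟨_, hσ ▸ Set.mem_image_of_mem _ hs, _, hσ ▸ Set.mem_image_of_mem _ hs', ?_⟩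
    rw [sigmaRefl_eq_iota, sigmaRefl_eq_iota, ccDist_iota]
    exact ccDist_le_of_mem_uIcc hn p q (by rwa [neg_sub_neg, ← neg_sub])

lemma ccDiam_nonneg (F : Set (Heis n)) : 0 ≤ ccDiam F :=
  Real.sSup_nonneg (by rintro _ ⟨p, -, q, -, rfl⟩; exact ccDist_nonneg p q)

lemma ccDiam_le_of_forall_exists {F G : Set (Heis n)} (hG : ccBounded G)
    (h : ∀ p ∈ F, ∀ q ∈ F, ∃ P ∈ G, ∃ Q ∈ G, ccDist p q ≤ ccDist P Q) :
    ccDiam F ≤ ccDiam G := by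
  obtain ⟨M, hM⟩ := hG
  refine Real.sSup_le ?_ (ccDiam_nonneg G)
  rintro _ ⟨p, hp, q, hq, rfl⟩
  obtain ⟨P, hP, Q, hQ, hle⟩ := h p hp q hq
  exact hle.trans (le_csSup ⟨M, by rintro _ ⟨P, hP, Q, hQ, rfl⟩; exact hM P hP Q hQ⟩
    ⟨P, hP, Q, hQ, rfl⟩)

/-- In `ℍ⁰` every horizontal curve has length `0`, and points at different heights are not joined
at all, so their distance is `sInf ∅ = 0`. -/
lemma ccDiam_eq_zero_of_dim_zero (F : Set (Heis 0)) : ccDiam F = 0 := by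
  refine le_antisymm (Real.sSup_nonpos ?_) (ccDiam_nonneg F)
  rintro _ ⟨p, -, q, -, rfl⟩
  rw [ccDist_eq_sInf]
  refine Real.sInf_nonpos (Set.forall_mem_image.2 fun γ _ => ?_)
  have : ∀ s, γ.z' s = 0 := fun s => Subsingleton.elim _ _
  simp [HorizCurve.length, this]

end Heis

/-- If `F` is compact and `σ(F) = F` (with `σ[z,t] = [conj z, t]`), then Steiner
symmetrization with respect to the `ℂⁿ`-plane does not increase the CC-diameter. -/
theorem stmt11 (n : ℕ) (F : Set (Heis n)) (hF : IsCompact F)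
    (hσ : Heis.sigmaRefl '' F = F) :
    Heis.ccDiam (Heis.steiner F) ≤ Heis.ccDiam F := by
  rcases Nat.eq_zero_or_pos n with rfl | hn
  · exact (Heis.ccDiam_eq_zero_of_dim_zero _).trans_le (Heis.ccDiam_nonneg F)
  · exact Heis.ccDiam_le_of_forall_exists (Heis.ccBounded_of_isCompact hn hF)
      fun p hp q hq => Heis.exists_ccDist_le_of_mem_steiner hn hF hσ hp hq
end
end
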